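/- For every word u ∈ Σ*, μ_q(ũ·ba·u) − μ_q(ũ·ab·u) = q^n · D_q, where ũ denotes the reversal of u and n = 2|u|_a + 4|u|_b (|u|_c being the number of occurrences of the letter c in u); moreover q^n = det(μ_q(u)). -/
import Mathlib


open Polynomial

/-- The letter `a` is encoded by `false`, the letter `b` by `true`.
`μ_q` of a single letter. -/
noncomputable def muqLetter : Bool → Matrix (Fin 2) (Fin 2) (Polynomial ℤ)
  | false => !![X + X ^ 2, 1; X, 1]
  | true  => !![X + 2 * X ^ 2 + X ^ 3 + X ^ 4, 1 + X; X + X ^ 2, 1]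

/-- The monoid homomorphism `μ_q : Σ* → M₂(ℤ[q])`, extended multiplicatively,
with the empty word mapped to the identity matrix. -/
noncomputable def muq (w : List Bool) : Matrix (Fin 2) (Fin 2) (Polynomial ℤ) :=
  (w.map muqLetter).prod


/-- The matrix `D_q = μ_q(ba) - μ_q(ab)`. -/
noncomputable def Dq : Matrix (Fin 2) (Fin 2) (Polynomial ℤ) :=
  !![0, X + X ^ 4; -X ^ 2 - X ^ 5, 0]

lemma muq_append (w₁ w₂ : List Bool) : muq (w₁ ++ w₂) = muq w₁ * muq w₂ := by
  simp [muq]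

lemma muq_cons (c : Bool) (w : List Bool) : muq (c :: w) = muqLetter c * muq w := by
  simp [muq]

lemma muq_singleton (c : Bool) : muq [c] = muqLetter c := by
  simp [muq]

lemma letter_conj (c : Bool) :
    muqLetter c * Dq * muqLetter c
      = (X : Polynomial ℤ) ^ (if c then 4 else 2) • Dq := by
  cases c <;>
    · refine Matrix.ext fun i j => ?_
      fin_cases i <;> fin_cases j <;>
        · simp [muqLetter, Dq, Matrix.mul_apply, Fin.sum_univ_two]
          ring

lemma key (u : List Bool) :
    muq u.reverse * Dq * muq u
      = (X : Polynomial ℤ) ^ (2 * u.count false + 4 * u.count true) • Dq := by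
  induction u with
  | nil => simp [muq]
  | cons c t ih =>
    have h1 : muq (c :: t).reverse = muq t.reverse * muqLetter c := by
      rw [List.reverse_cons, muq_append, muq_singleton]
    rw [h1, muq_cons]
    have : muq t.reverse * muqLetter c * Dq * (muqLetter c * muq t)
        = muq t.reverse * (muqLetter c * Dq * muqLetter c) * muq t := by
      noncomm_ring
    rw [this, letter_conj c, mul_smul_comm, smul_mul_assoc, ih, smul_smul, ← pow_add]
    congr 1
    cases c <;> simp [List.count_cons] <;> ring

lemma det_letter (c : Bool) :
    (muqLetter c).det = (X : Polynomial ℤ) ^ (if c then 4 else 2) := by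
  cases c <;> simp [muqLetter, Matrix.det_fin_two_of] <;> ring

lemma det_muq (u : List Bool) :
    (muq u).det = (X : Polynomial ℤ) ^ (2 * u.count false + 4 * u.count true) := by
  induction u with
  | nil => simp [muq]
  | cons c t ih =>
    rw [muq_cons, Matrix.det_mul, det_letter, ih, ← pow_add]
    congr 1
    cases c <;> simp [List.count_cons] <;> ring

lemma Dq_eq : muq [true, false] - muq [false, true] = Dq := by
  refine Matrix.ext fun i j => ?_
  fin_cases i <;> fin_cases j <;>
    · simp [muq, muqLetter, Dq, Matrix.mul_apply, Fin.sum_univ_two]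
      ring

theorem muq_flip_difference (u : List Bool) :
    muq (u.reverse ++ [true, false] ++ u) - muq (u.reverse ++ [false, true] ++ u)
      = (X : Polynomial ℤ) ^ (2 * u.count false + 4 * u.count true) • Dq ∧
    (muq u).det = (X : Polynomial ℤ) ^ (2 * u.count false + 4 * u.count true) := by
  refine ⟨?_, det_muq u⟩
  rw [muq_append, muq_append, muq_append, muq_append, ← sub_mul, ← Matrix.mul_sub,
    Dq_eq, key]
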